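/- arXiv:1805.09271 — 2 statements merged into one kernel-verified Lean document; each statement's English description precedes it below -/
import Mathlib

section
/- Let m_1, …, m_r be a check set on n qubits with syndrome map σ and stabilizer span S, let H : F2^r → F2^l be a metacheck matrix for it, and suppose the check set is (t, f)-sound with f : ℕ → ℝ monotone nondecreasing. Let e ∈ F2^n × F2^n and u ∈ F2^r, set s := σ(e) + u, and assume: (i) every y ∈ F2^r with H y = 0 and |y| ≤ 2|u| lies in the image of σ; (ii) 2|u| < t; (iii) every e' with σ(e') = 0 and wt(e') ≤ 2·(f(2|u|) + wt(e)) lies in S. Let s_rec have minimum Hamming weight among all v with H(s + v) = 0, and let e_rec have minimum weight wt among all solutions of σ(e_rec) = s + s_rec (such solutions exist). Then the residual error R := e + e_rec satisfies wt_min(R) ≤ f(2|u|). -/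
open Finset

abbrev F2 := ZMod 2

abbrev Pauli (n : ℕ) := (Fin n → F2) × (Fin n → F2)

/-- Hamming weight of a vector over `F2`. -/
def vwt {ι : Type*} [Fintype ι] (v : ι → F2) : ℕ :=
  (Finset.univ.filter fun i => v i ≠ 0).card

/-- Weight of a Pauli operator: number of qubits on which it acts nontrivially. -/
def pwt {n : ℕ} (e : Pauli n) : ℕ :=
  (Finset.univ.filter fun i => e.1 i ≠ 0 ∨ e.2 i ≠ 0).card

/-- Symplectic product of two Pauli operators. -/
def symp {n : ℕ} (e e' : Pauli n) : F2 :=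
  (∑ i, e.1 i * e'.2 i) + (∑ i, e.2 i * e'.1 i)

/-- Syndrome map of a check set. -/
def synd {n r : ℕ} (m : Fin r → Pauli n) (e : Pauli n) : Fin r → F2 :=
  fun i => symp (m i) e

/-- Stabilizer span of a check set. -/
def stab {n r : ℕ} (m : Fin r → Pauli n) : Submodule F2 (Pauli n) :=
  Submodule.span F2 (Set.range m)

/-- Minimum weight of a Pauli modulo the stabilizer span. -/
noncomputable def wtmin {n r : ℕ} (m : Fin r → Pauli n) (e : Pauli n) : ℕ :=
  sInf {w | ∃ s ∈ stab m, w = pwt (e + s)}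

/-- `(t, f)`-soundness of a check set. -/
def IsSound {n r : ℕ} (m : Fin r → Pauli n) (t : ℕ) (f : ℕ → ℝ) : Prop :=
  ∀ e : Pauli n, vwt (synd m e) < t →
    ∃ e' : Pauli n, synd m e' = synd m e ∧ (pwt e' : ℝ) ≤ f (vwt (synd m e))


lemma vwt_add_le {ι : Type*} [Fintype ι] (a b : ι → F2) : vwt (a + b) ≤ vwt a + vwt b := by
  classical
  unfold vwt
  refine le_trans (Finset.card_le_card ?_) (Finset.card_union_le _ _)
  intro i hi
  simp only [Finset.mem_filter, Finset.mem_union, Finset.mem_univ, true_and] at hi ⊢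
  by_contra hc
  push_neg at hc
  exact hi (by simp [Pi.add_apply, hc.1, hc.2])

lemma pwt_add_le {n : ℕ} (a b : Pauli n) : pwt (a + b) ≤ pwt a + pwt b := by
  classical
  unfold pwt
  refine le_trans (Finset.card_le_card ?_) (Finset.card_union_le _ _)
  intro i hi
  simp only [Finset.mem_filter, Finset.mem_union, Finset.mem_univ, true_and] at hi ⊢
  by_contra hc
  push_neg at hc
  obtain ⟨⟨h1, h2⟩, h3, h4⟩ := hc
  rcases hi with h | h
  · exact h (by show a.1 i + b.1 i = 0; rw [h1, h3, add_zero])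
  · exact h (by show a.2 i + b.2 i = 0; rw [h2, h4, add_zero])

lemma synd_add {n r : ℕ} (m : Fin r → Pauli n) (a b : Pauli n) :
    synd m (a + b) = synd m a + synd m b := by
  funext i
  simp only [synd, symp, Pi.add_apply, Prod.fst_add, Prod.snd_add, mul_add,
    Finset.sum_add_distrib]
  ring

lemma add_self_F2 {ι : Type*} (a : ι → F2) : a + a = 0 := by
  funext i
  simp only [Pi.add_apply, Pi.zero_apply]
  exact CharTwo.add_self_eq_zero _

lemma padd_self {n : ℕ} (a : Pauli n) : a + a = 0 := by
  ext i <;> exact CharTwo.add_self_eq_zero _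

/-- Lemma 2: an upper bound on residual error: minimum-weight single-shot
decoding yields a residual error of small minimum weight. -/
theorem residual_error_bound
    (n r l t : ℕ) (m : Fin r → Pauli n)
    (hcomm : ∀ i j, symp (m i) (m j) = 0)
    (H : Matrix (Fin l) (Fin r) F2)
    (hmeta : ∀ e : Pauli n, H.mulVec (synd m e) = 0)
    (f : ℕ → ℝ) (hfmono : Monotone f)
    (hsound : IsSound m t f)
    (e : Pauli n) (u : Fin r → F2)
    (s : Fin r → F2) (hs : s = synd m e + u)
    (hdss : ∀ y : Fin r → F2, H.mulVec y = 0 → vwt y ≤ 2 * vwt u →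
      ∃ e' : Pauli n, synd m e' = y)
    (ht : 2 * vwt u < t)
    (hdQ : ∀ e' : Pauli n, synd m e' = 0 →
      (pwt e' : ℝ) ≤ 2 * (f (2 * vwt u) + (pwt e : ℝ)) → e' ∈ stab m)
    (srec : Fin r → F2)
    (hsrec : H.mulVec (s + srec) = 0)
    (hsrecmin : ∀ v : Fin r → F2, H.mulVec (s + v) = 0 → vwt srec ≤ vwt v)
    (erec : Pauli n)
    (herec : synd m erec = s + srec)
    (herecmin : ∀ e' : Pauli n, synd m e' = s + srec → pwt erec ≤ pwt e') :
    (wtmin m (e + erec) : ℝ) ≤ f (2 * vwt u) := by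
  -- |srec| ≤ |u|
  have hHu : H.mulVec (s + u) = 0 := by
    rw [hs]
    have : synd m e + u + u = synd m e := by
      rw [add_assoc, add_self_F2, add_zero]
    rw [this]; exact hmeta e
  have hsrecu : vwt srec ≤ vwt u := hsrecmin u hHu
  -- y := u + srec
  set y : Fin r → F2 := u + srec with hy
  have hyv : vwt y ≤ 2 * vwt u := by
    calc vwt y ≤ vwt u + vwt srec := vwt_add_le u srec
    _ ≤ vwt u + vwt u := by omega
    _ = 2 * vwt u := by omega
  have hssy : s + srec = synd m e + y := by
    rw [hs, hy]; abel
  have hHy : H.mulVec y = 0 := by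
    have : y = (s + srec) + synd m e := by
      rw [hssy, show synd m e + y + synd m e = y + (synd m e + synd m e) from by abel,
        add_self_F2, add_zero]
    rw [this, Matrix.mulVec_add, hsrec, hmeta, add_zero]
  obtain ⟨e'', he''⟩ := hdss y hHy hyv
  have he''lt : vwt (synd m e'') < t := by rw [he'']; omega
  obtain ⟨estar, hestar, hestarw⟩ := hsound e'' he''lt
  rw [he''] at hestar
  have hestarf : (pwt estar : ℝ) ≤ f (2 * vwt u) := by
    refine le_trans hestarw (hfmono ?_)
    rw [he'']; exact hyv
  -- σ(e + estar) = s + srec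
  have hsees : synd m (e + estar) = s + srec := by
    rw [synd_add, hestar, hssy]
  have herecle : pwt erec ≤ pwt e + pwt estar :=
    le_trans (herecmin _ hsees) (pwt_add_le e estar)
  -- R + estar ∈ stab
  have hsynd0 : synd m (e + erec + estar) = 0 := by
    rw [synd_add, synd_add, hestar, herec, hssy,
      show synd m e + (synd m e + y) + y = (synd m e + synd m e) + (y + y) from by abel,
      add_self_F2, add_self_F2, add_zero]
  have hwle : (pwt (e + erec + estar) : ℝ) ≤ 2 * (f (2 * vwt u) + (pwt e : ℝ)) := by
    have h1 : pwt (e + erec + estar) ≤ pwt e + pwt erec + pwt estar :=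
      le_trans (pwt_add_le _ _) (by have := pwt_add_le e erec; omega)
    have h2 : pwt (e + erec + estar) ≤ 2 * pwt e + 2 * pwt estar := by omega
    calc (pwt (e + erec + estar) : ℝ) ≤ ((2 * pwt e + 2 * pwt estar : ℕ) : ℝ) := by
          exact_mod_cast h2
      _ = 2 * (pwt estar : ℝ) + 2 * (pwt e : ℝ) := by push_cast; ring
      _ ≤ 2 * (f (2 * vwt u) + (pwt e : ℝ)) := by nlinarith [hestarf]
  have hmem : e + erec + estar ∈ stab m := hdQ _ hsynd0 hwle
  -- wtmin ≤ pwt estar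
  have hle : wtmin m (e + erec) ≤ pwt estar := by
    apply Nat.sInf_le
    refine ⟨e + erec + estar, hmem, ?_⟩
    congr 1
    rw [show e + erec + (e + erec + estar) = (e + erec) + (e + erec) + estar by abel,
      padd_self, zero_add]
  calc (wtmin m (e + erec) : ℝ) ≤ (pwt estar : ℝ) := by exact_mod_cast hle
    _ ≤ f (2 * vwt u) := hestarf
end

section
/- (Distance bound for the level-1 homology of the double product: d̆_1 ≥ min(d̃_0, d̃_{−1}ᵀ).) Let δ_{−1} ∈ M_{n0 × n_{−1}}(F2) and δ_0 ∈ M_{n1 × n0}(F2) satisfy δ_0·δ_{−1} = 0. Suppose S_a ∈ M_{n0 × n_{−1}}(F2) and S_b ∈ M_{n1 × n0}(F2) satisfy δ_0·S_a = S_b·δ_{−1}, and that there are no matrices R_a ∈ M_{n_{−1} × n_{−1}}(F2), R_b ∈ M_{n0 × n0}(F2), R_c ∈ M_{n1 × n1}(F2) with S_a = δ_{−1}·R_a + R_b·δ_{−1} and S_b = δ_0·R_b + R_c·δ_0. Then either there exists c with δ_0·c = 0, c not in the image of δ_{−1}, and |c| ≤ |S_a| + |S_b|, or there exists c' with δ_{−1}ᵀ·c'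 = 0, c' not in the image of δ_0ᵀ, and |c'| ≤ |S_a| + |S_b|. -/
open Matrix
open scoped Kronecker

/-- Hamming weight of a matrix over `F2` (number of nonzero entries). -/
def mwt {ι κ : Type*} [Fintype ι] [Fintype κ] (M : Matrix ι κ F2) : ℕ :=
  (Finset.univ.filter fun p : ι × κ => M p.1 p.2 ≠ 0).card

/-- Nullity of a matrix over `F2`: dimension of the kernel of the induced linear map. -/
noncomputable def nullity {ι κ : Type*} [Fintype ι] [Fintype κ] (M : Matrix ι κ F2) : ℕ :=
  Module.finrank F2 (LinearMap.ker M.mulVecLin)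

/-!
`(Sa, Sb)` is a degree-one chain map and `(Ra, Rb, Rc)` as excluded by `hnontriv` is a
null-homotopy of it. Over a field such a homotopy exists as soon as `Sa` maps `ker δ₋₁` into
`im δ₋₁` and `Sbᵀ` maps `ker δ₀ᵀ` into `im δ₀ᵀ`, and otherwise some `Sa x` or `Sbᵀ y` is a
nontrivial cycle of weight at most `|Sa| + |Sb|`. For a generalized inverse `G` of `d`
(`d G d = d`), a map `a` sending `ker d` into `im d` equals `(a G) d + d (G a (1 - G d))`; the
homotopies this gives at the two ends of the complex are glued by correcting `Rb` by a multiple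
of the projection `δ₋₁ G`.
-/

theorem LinearMap.exists_comp_comp_eq_self {K V W : Type*} [Field K] [AddCommGroup V]
    [Module K V] [AddCommGroup W] [Module K W] (f : V →ₗ[K] W) :
    ∃ g : W →ₗ[K] V, f ∘ₗ g ∘ₗ f = f := by
  obtain ⟨σ, hσ⟩ := f.rangeRestrict.exists_rightInverse_of_surjective f.range_rangeRestrict
  obtain ⟨τ, hτ⟩ := (range f).subtype.exists_leftInverse_of_injective (range f).ker_subtype
  refine ⟨σ ∘ₗ τ, ?_⟩
  calc f ∘ₗ (σ ∘ₗ τ) ∘ₗ f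
      = (range f).subtype ∘ₗ (f.rangeRestrict ∘ₗ σ) ∘ₗ (τ ∘ₗ (range f).subtype) ∘ₗ
          f.rangeRestrict := rfl
    _ = f := by rw [hσ, hτ]; rfl

namespace Matrix

variable {K l m n : Type*} [Field K] [Fintype l] [Fintype m] [Fintype n]

theorem exists_mul_mul_eq_self [DecidableEq m] [DecidableEq n] (A : Matrix m n K) :
    ∃ G : Matrix n m K, A * G * A = A := by
  obtain ⟨g, hg⟩ := (toLin' A).exists_comp_comp_eq_self
  refine ⟨LinearMap.toMatrix' g, toLin'.injective ?_⟩
  rw [toLin'_mul, toLin'_mul, toLin'_toMatrix', LinearMap.comp_assoc, hg]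

theorem exists_eq_mul_add_mul_of_mapsTo_ker_range [DecidableEq m] [DecidableEq n]
    (d a : Matrix m n K) (h : ∀ x, d *ᵥ x = 0 → ∃ y, d *ᵥ y = a *ᵥ x) :
    ∃ (r : Matrix n n K) (s : Matrix m m K), a = d * r + s * d := by
  obtain ⟨G, hG⟩ := d.exists_mul_mul_eq_self
  have hrange : d * G * (a * (1 - G * d)) = a * (1 - G * d) := by
    refine toLin'.injective (LinearMap.ext fun x => ?_)
    obtain ⟨y, hy⟩ := h ((1 - G * d) *ᵥ x) (by
      rw [mulVec_mulVec, Matrix.mul_sub, Matrix.mul_one, ← Matrix.mul_assoc, hG, sub_self,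
        zero_mulVec])
    simp only [toLin'_apply, ← mulVec_mulVec, ← hy]
    rw [mulVec_mulVec, mulVec_mulVec, hG]
  refine ⟨G * a * (1 - G * d), a * G, ?_⟩
  calc a = a * (G * d) + a * (1 - G * d) := by
        rw [← Matrix.mul_add, add_sub_cancel, Matrix.mul_one]
    _ = d * (G * a * (1 - G * d)) + a * G * d := by
        rw [add_comm, ← hrange]
        simp only [Matrix.mul_assoc]

theorem exists_homotopy_of_homotopies [DecidableEq l] [DecidableEq m]
    {d₁ : Matrix m l K} {d₀ : Matrix n m K} (hchain : d₀ * d₁ = 0)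
    {Sa : Matrix m l K} {Sb : Matrix n m K} (hcycle : d₀ * Sa = Sb * d₁)
    {Ra : Matrix l l K} {Rb Rb' : Matrix m m K} {Rc : Matrix n n K}
    (ha : Sa = d₁ * Ra + Rb * d₁) (hb : Sb = d₀ * Rb' + Rc * d₀) :
    ∃ Rb'' : Matrix m m K, Sa = d₁ * Ra + Rb'' * d₁ ∧ Sb = d₀ * Rb'' + Rc * d₀ := by
  obtain ⟨G, hG⟩ := d₁.exists_mul_mul_eq_self
  have hdiff : d₀ * (Rb - Rb') * d₁ = 0 := by
    rw [ha, hb, Matrix.mul_add, Matrix.add_mul, ← Matrix.mul_assoc, hchain, Matrix.zero_mul,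
      Matrix.mul_assoc Rc, hchain, Matrix.mul_zero, zero_add, add_zero, ← Matrix.mul_assoc]
      at hcycle
    rw [Matrix.mul_sub, Matrix.sub_mul, hcycle, sub_self]
  refine ⟨Rb' + (Rb - Rb') * d₁ * G, ?_, ?_⟩
  · rw [ha, Matrix.add_mul, Matrix.mul_assoc _ G, Matrix.mul_assoc, ← Matrix.mul_assoc d₁, hG,
      Matrix.sub_mul]
    abel
  · rw [hb, Matrix.mul_add, ← Matrix.mul_assoc, ← Matrix.mul_assoc, hdiff, Matrix.zero_mul,
      add_zero]

theorem exists_homotopy_of_mapsTo_ker_range [DecidableEq l] [DecidableEq m] [DecidableEq n]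
    {d₁ : Matrix m l K} {d₀ : Matrix n m K} (hchain : d₀ * d₁ = 0)
    {Sa : Matrix m l K} {Sb : Matrix n m K} (hcycle : d₀ * Sa = Sb * d₁)
    (ha : ∀ x, d₁ *ᵥ x = 0 → ∃ y, d₁ *ᵥ y = Sa *ᵥ x)
    (hb : ∀ x, d₀ᵀ *ᵥ x = 0 → ∃ y, d₀ᵀ *ᵥ y = Sbᵀ *ᵥ x) :
    ∃ (Ra : Matrix l l K) (Rb : Matrix m m K) (Rc : Matrix n n K),
      Sa = d₁ * Ra + Rb * d₁ ∧ Sb = d₀ * Rb + Rc * d₀ := by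
  obtain ⟨Ra, Rb, hSa⟩ := exists_eq_mul_add_mul_of_mapsTo_ker_range d₁ Sa ha
  obtain ⟨Rc, Rb', hSb⟩ := exists_eq_mul_add_mul_of_mapsTo_ker_range d₀ᵀ Sbᵀ hb
  have hSb' : Sb = d₀ * Rb'ᵀ + Rcᵀ * d₀ := by
    rw [← transpose_transpose Sb, hSb, transpose_add, transpose_mul, transpose_mul,
      transpose_transpose, add_comm]
  obtain ⟨Rb'', h₁, h₂⟩ := exists_homotopy_of_homotopies hchain hcycle hSa hSb'
  exact ⟨Ra, Rb'', Rcᵀ, h₁, h₂⟩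

end Matrix

theorem vwt_mulVec_le_mwt {ι κ : Type*} [Fintype ι] [Fintype κ] (M : Matrix ι κ F2)
    (x : κ → F2) : vwt (M *ᵥ x) ≤ mwt M := by
  classical
  refine (Finset.card_le_card fun i hi => ?_).trans (Finset.card_image_le (f := Prod.fst))
  obtain ⟨j, -, hj⟩ := Finset.exists_ne_zero_of_sum_ne_zero (Finset.mem_filter.1 hi).2
  exact Finset.mem_image.2 ⟨(i, j), by simpa using left_ne_zero_of_mul hj, rfl⟩

theorem mwt_transpose {ι κ : Type*} [Fintype ι] [Fintype κ] (M : Matrix ι κ F2) :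
    mwt Mᵀ = mwt M := by
  unfold mwt
  exact Finset.card_equiv (Equiv.prodComm κ ι) fun _ => by
    simp only [Finset.mem_filter, Finset.mem_univ, true_and]; rfl

/-- distance bound for level-1 homology of the double product:
`d̆₁ ≥ min(d̃₀, d̃₋₁ᵀ)`, in reshaped matrix form. -/
theorem double_product_level1_distance
    (nm1 n0 n1 : ℕ)
    (dm1 : Matrix (Fin n0) (Fin nm1) F2) (d0 : Matrix (Fin n1) (Fin n0) F2)
    (hchain : d0 * dm1 = 0)
    (Sa : Matrix (Fin n0) (Fin nm1) F2) (Sb : Matrix (Fin n1) (Fin n0) F2)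
    (hcycle : d0 * Sa = Sb * dm1)
    (hnontriv : ¬ ∃ (Ra : Matrix (Fin nm1) (Fin nm1) F2) (Rb : Matrix (Fin n0) (Fin n0) F2)
      (Rc : Matrix (Fin n1) (Fin n1) F2),
      Sa = dm1 * Ra + Rb * dm1 ∧ Sb = d0 * Rb + Rc * d0) :
    (∃ c : Fin n0 → F2, d0.mulVec c = 0 ∧ (¬ ∃ y : Fin nm1 → F2, dm1.mulVec y = c) ∧
      vwt c ≤ mwt Sa + mwt Sb) ∨
    (∃ c' : Fin n0 → F2, dm1ᵀ.mulVec c' = 0 ∧ (¬ ∃ y : Fin n1 → F2, d0ᵀ.mulVec y = c') ∧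
      vwt c' ≤ mwt Sa + mwt Sb) := by
  by_contra hcon
  obtain ⟨hc, hc'⟩ := not_or.1 hcon
  refine hnontriv (exists_homotopy_of_mapsTo_ker_range hchain hcycle (fun x hx => ?_)
    fun y hy => ?_)
  · by_contra hx_range
    refine hc ⟨Sa *ᵥ x, ?_, hx_range, (vwt_mulVec_le_mwt Sa x).trans (Nat.le_add_right _ _)⟩
    rw [mulVec_mulVec, hcycle, ← mulVec_mulVec, hx, mulVec_zero]
  · by_contra hy_range
    refine hc' ⟨Sbᵀ *ᵥ y, ?_, hy_range, ?_⟩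
    · rw [mulVec_mulVec, ← transpose_mul, ← hcycle, transpose_mul, ← mulVec_mulVec, hy,
        mulVec_zero]
    · exact (vwt_mulVec_le_mwt Sbᵀ y).trans ((mwt_transpose Sb).trans_le (Nat.le_add_left _ _))
end
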